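/- arXiv:math/0410009 — 7 statements merged into one kernel-verified Lean document; each statement's English description precedes it below -/
import Mathlib

section
/- Let n < 2j be non-negative integers and set α = n mod 2. Then for all real t with |t| < 1, t^n/(1-t^2)^j = Σ_{i=1}^{j} β_i^{(n,j)} φ_i^α(t), where φ_i^α(t) = (1-t)^{-i} + (-1)^α (1+t)^{-i} and the coefficients are β_{j-k}^{(n,j)} = 2^{-j-k} Σ_{i=0}^{k} (-2)^i C(n,i) C(k+j-1-i, j-1) for 0 ≤ k ≤ j-1. -/
open Finset
open Polynomial

noncomputable def phiAB (i α : ℕ) (t : ℝ) : ℝ :=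
  (1 - t) ^ (-(i : ℤ)) + (-1 : ℝ) ^ α * (1 + t) ^ (-(i : ℤ))

noncomputable def betaCoef (n j i : ℕ) : ℝ :=
  (2 : ℝ) ^ (-(j : ℤ) - ((j - i : ℕ) : ℤ)) *
    ∑ l ∈ Finset.range ((j - i) + 1),
      (-2 : ℝ) ^ l * (n.choose l) * (((j - i) + j - 1 - l).choose (j - 1))

noncomputable def cCoef (n j k : ℕ) : ℝ :=
  ∑ l ∈ Finset.range (k + 1),
    (-2 : ℝ) ^ l * (n.choose l) * ((k + j - 1 - l).choose (j - 1))

lemma coeff_one_add_C_mul_X_pow (a : ℝ) (n k : ℕ) :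
    ((1 + C a * X : ℝ[X]) ^ n).coeff k = a ^ k * n.choose k := by
  have h : ((1 + C a * X : ℝ[X]) ^ n) =
      ∑ m ∈ range (n + 1), C (a ^ m * n.choose m) * X ^ m := by
    rw [add_comm (1 : ℝ[X]), add_pow]
    refine Finset.sum_congr rfl fun m _ => ?_
    rw [mul_pow, ← C_pow, one_pow, mul_one, map_mul, ← C_eq_natCast]
    ring
  rw [h, finset_sum_coeff]
  simp only [coeff_C_mul, coeff_X_pow, mul_ite, mul_one, mul_zero]
  rw [Finset.sum_ite_eq (range (n + 1)) k]
  by_cases hk : k ≤ n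
  · simp [Finset.mem_range, Nat.lt_succ_of_le hk]
  · rw [if_neg (by simp [Finset.mem_range]; omega), Nat.choose_eq_zero_of_lt (by omega)]
    simp

lemma key_poly (n j : ℕ) (hnj : n < 2 * j) :
    ((1 : ℝ[X]) + C (-2) * X) ^ n =
      ∑ k ∈ range j, C (cCoef n j k) *
        (X ^ k * (1 - X) ^ j + (-1 : ℝ[X]) ^ n * ((1 - X) ^ k * X ^ j)) := by
  have hj : 0 < j := by omega
  set P : ℝ[X] := ((1 : ℝ[X]) + C (-2) * X) ^ n with hP
  set A : ℝ[X] := ∑ k ∈ range j, C (cCoef n j k) * X ^ k with hA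
  set B : ℝ[X] := ∑ k ∈ range j, C (cCoef n j k) * (1 - X) ^ k with hB
  -- coefficients of A
  have hAcoeff : ∀ d < j, A.coeff d = cCoef n j d := by
    intro d hd
    rw [hA, finset_sum_coeff]
    simp only [coeff_C_mul, coeff_X_pow, mul_ite, mul_one, mul_zero]
    rw [Finset.sum_ite_eq (range j) d, if_pos (Finset.mem_range.2 hd)]
  -- Step A : X^j ∣ A * (1-X)^j - P
  have hstepA : (X : ℝ[X]) ^ j ∣ A * (1 - X) ^ j - P := by
    set U := PowerSeries.invOneSubPow ℝ j with hU
    have hUval : U.val = PowerSeries.mk fun r => ((j - 1 + r).choose (j - 1) : ℝ) :=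
      PowerSeries.invOneSubPow_val_eq_mk_sub_one_add_choose_of_pos ℝ j hj
    have hUinv : U.inv = (1 - PowerSeries.X : PowerSeries ℝ) ^ j :=
      PowerSeries.invOneSubPow_inv_eq_one_sub_pow ℝ j
    have hdvd1 : (PowerSeries.X : PowerSeries ℝ) ^ j ∣ ((A : PowerSeries ℝ) - (P : PowerSeries ℝ) * U.val) := by
      rw [PowerSeries.X_pow_dvd_iff]
      intro d hd
      rw [map_sub, PowerSeries.coeff_mul, Finset.Nat.sum_antidiagonal_eq_sum_range_succ_mk]
      simp only [Polynomial.coeff_coe, hUval, PowerSeries.coeff_mk]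
      rw [hAcoeff d hd]
      have : ∑ l ∈ range (d + 1), P.coeff l * ((j - 1 + (d - l)).choose (j - 1) : ℝ)
          = cCoef n j d := by
        rw [cCoef]
        refine Finset.sum_congr rfl fun l hl => ?_
        rw [hP, coeff_one_add_C_mul_X_pow]
        have hl' : l ≤ d := by simpa using Nat.lt_succ_iff.mp (Finset.mem_range.mp hl)
        have : j - 1 + (d - l) = d + j - 1 - l := by omega
        rw [this, mul_assoc]
      rw [this, sub_self]
    have key : ((A : PowerSeries ℝ) - (P : PowerSeries ℝ) * U.val) * U.inv
        = ((A * (1 - X) ^ j - P : ℝ[X]) : PowerSeries ℝ) := by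
      push_cast
      rw [sub_mul, mul_assoc, U.val_inv, mul_one, hUinv]
    have : (PowerSeries.X : PowerSeries ℝ) ^ j ∣ ((A * (1 - X) ^ j - P : ℝ[X]) : PowerSeries ℝ) := by
      rw [← key]; exact hdvd1.mul_right _
    rw [Polynomial.X_pow_dvd_iff]
    intro d hd
    have h0 := (PowerSeries.X_pow_dvd_iff.mp this) d hd
    rwa [Polynomial.coeff_coe] at h0
  -- composition facts
  have hone : ((1 : ℝ[X]) - X).comp (1 - X) = X := by
    simp [sub_comp]
  have hcompsum : ∀ q r : ℝ[X],
      (∑ k ∈ range j, C (cCoef n j k) * q ^ k).comp r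
        = ∑ k ∈ range j, C (cCoef n j k) * (q.comp r) ^ k := by
    intro q r
    rw [Polynomial.sum_comp]
    simp [mul_comp, pow_comp, C_comp]
  have hAcomp : A.comp (1 - X) = B := by
    rw [hA, hB, hcompsum]
    simp [X_comp]
  have hBcomp : B.comp (1 - X) = A := by
    rw [hA, hB, hcompsum, hone]
  have hPcomp : P.comp (1 - X) = (-1 : ℝ[X]) ^ n * P := by
    have hbase : (1 : ℝ[X]) + C (-2) * (1 - X) = -1 * (1 + C (-2) * X) := by
      have : (C (-2 : ℝ) : ℝ[X]) = -2 := by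
        rw [map_neg, map_ofNat]
      rw [this]; ring
    rw [hP, pow_comp, add_comp, one_comp, mul_comp, C_comp, X_comp, hbase, mul_pow]
  set Q : ℝ[X] := A * (1 - X) ^ j + (-1 : ℝ[X]) ^ n * (B * X ^ j) - P with hQ
  have h1 : ((-1 : ℝ[X])) ^ n * (-1 : ℝ[X]) ^ n = 1 := by
    rw [← pow_add]
    exact Even.neg_one_pow ⟨n, rfl⟩
  have hQcomp : Q.comp (1 - X) = (-1 : ℝ[X]) ^ n * Q := by
    rw [hQ]
    simp only [sub_comp, add_comp, mul_comp, pow_comp, neg_comp, one_comp, X_comp,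
      hone, hAcomp, hBcomp, hPcomp]
    linear_combination (-(B * X ^ j)) * h1
  have hQdvd1 : (X : ℝ[X]) ^ j ∣ Q := by
    rw [hQ]
    have : A * (1 - X) ^ j + (-1 : ℝ[X]) ^ n * (B * X ^ j) - P
        = (A * (1 - X) ^ j - P) + (-1 : ℝ[X]) ^ n * B * X ^ j := by ring
    rw [this]
    exact dvd_add hstepA (dvd_mul_left _ _)
  have hQdvd2 : ((1 : ℝ[X]) - X) ^ j ∣ Q := by
    obtain ⟨S, hS⟩ := hQdvd1
    have hQ2 : Q = (-1 : ℝ[X]) ^ n * Q.comp (1 - X) := by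
      rw [hQcomp, ← mul_assoc, h1, one_mul]
    refine ⟨(-1 : ℝ[X]) ^ n * S.comp (1 - X), ?_⟩
    rw [hQ2, hS, mul_comp, pow_comp, X_comp]
    ring
  have hcop : IsCoprime ((X : ℝ[X]) ^ j) (((1 : ℝ[X]) - X) ^ j) :=
    IsCoprime.pow ⟨1, 1, by ring⟩
  have hdvd : (X : ℝ[X]) ^ j * ((1 : ℝ[X]) - X) ^ j ∣ Q := hcop.mul_dvd hQdvd1 hQdvd2
  -- degrees
  have hdegA : A.natDegree ≤ j - 1 := by
    rw [hA]
    refine Polynomial.natDegree_sum_le_of_forall_le _ _ fun k hk => ?_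
    refine le_trans (natDegree_mul_le) ?_
    simp only [natDegree_C, natDegree_X_pow, zero_add]
    exact Nat.le_sub_one_of_lt (Finset.mem_range.mp hk)
  have hdeg1X : ((1 : ℝ[X]) - X).natDegree = 1 := by
    rw [show ((1 : ℝ[X]) - X) = -(X - C 1) from by rw [map_one]; ring, natDegree_neg, natDegree_X_sub_C]
  have hdegB : B.natDegree ≤ j - 1 := by
    rw [hB]
    refine Polynomial.natDegree_sum_le_of_forall_le _ _ fun k hk => ?_
    refine le_trans (natDegree_mul_le) ?_
    refine le_trans (add_le_add (natDegree_C _).le (natDegree_pow_le)) ?_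
    rw [hdeg1X, zero_add, mul_one]
    exact Nat.le_sub_one_of_lt (Finset.mem_range.mp hk)
  have hdegP : P.natDegree ≤ n := by
    rw [hP]
    refine le_trans (natDegree_pow_le) ?_
    have h2 : ((1 : ℝ[X]) + C (-2) * X).natDegree ≤ 1 := by
      refine le_trans (natDegree_add_le _ _) (max_le (by simp) ?_)
      refine le_trans (natDegree_mul_le) ?_
      simp
    calc n * ((1 : ℝ[X]) + C (-2) * X).natDegree ≤ n * 1 := Nat.mul_le_mul_left n h2
      _ = n := mul_one n
  have hdegQ : Q.natDegree < 2 * j := by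
    rw [hQ]
    refine lt_of_le_of_lt (natDegree_sub_le _ _) ?_
    rw [max_lt_iff]
    constructor
    · refine lt_of_le_of_lt (natDegree_add_le _ _) ?_
      rw [max_lt_iff]
      constructor
      · refine lt_of_le_of_lt (natDegree_mul_le) ?_
        have := natDegree_pow_le (p := (1 : ℝ[X]) - X) (n := j)
        rw [hdeg1X, mul_one] at this
        omega
      · refine lt_of_le_of_lt (natDegree_mul_le) ?_
        have h1 : ((-1 : ℝ[X]) ^ n).natDegree ≤ 0 := by
          refine le_trans (natDegree_pow_le) ?_
          simp
        have h2 : (B * X ^ j).natDegree ≤ (j - 1) + j :=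
          le_trans (natDegree_mul_le) (by rw [natDegree_X_pow]; omega)
        omega
    · omega
  have h1Xne : ((1 : ℝ[X]) - X) ≠ 0 := by
    intro h
    rw [h] at hdeg1X
    simp at hdeg1X
  have hdegD : ((X : ℝ[X]) ^ j * ((1 : ℝ[X]) - X) ^ j).natDegree = 2 * j := by
    rw [natDegree_mul (pow_ne_zero _ X_ne_zero) (pow_ne_zero _ h1Xne),
      natDegree_X_pow, natDegree_pow, hdeg1X]
    omega
  have hQ0 : Q = 0 := Polynomial.eq_zero_of_dvd_of_natDegree_lt hdvd (by rw [hdegD]; exact hdegQ)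
  -- conclude
  have h := hQ0
  rw [hQ] at h
  have hmain : P = A * (1 - X) ^ j + (-1 : ℝ[X]) ^ n * (B * X ^ j) :=
    (sub_eq_zero.mp h).symm
  rw [hmain, hA, hB]
  rw [Finset.sum_mul, Finset.sum_mul, Finset.mul_sum, ← Finset.sum_add_distrib]
  refine Finset.sum_congr rfl fun k _ => ?_
  ring

lemma neg_one_pow_mod (n : ℕ) : (-1 : ℝ) ^ (n % 2) = (-1 : ℝ) ^ n := by
  conv_rhs => rw [← Nat.div_add_mod n 2]
  rw [pow_add, pow_mul]
  norm_num

lemma term_eq (a b c ε : ℝ) (ha : a ≠ 0) (hb : b ≠ 0) (j k : ℕ) (hk : k ≤ j) :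
    (2 : ℝ) ^ (-(j : ℤ) - (k : ℤ)) * c * ((a ^ (-((j - k : ℕ) : ℤ)) + ε * b ^ (-((j - k : ℕ) : ℤ))) * (a * b) ^ j)
      = c * ((a / 2) ^ k * (b / 2) ^ j + ε * ((b / 2) ^ k * (a / 2) ^ j)) := by
  have hzp : ∀ x : ℝ, x ≠ 0 → x ^ (-((j - k : ℕ) : ℤ)) * x ^ j = x ^ k := by
    intro x hx
    rw [← zpow_natCast x j, ← zpow_add₀ hx, ← zpow_natCast x k]
    congr 1
    omega
  have h2 : (2 : ℝ) ^ (-(j : ℤ) - (k : ℤ)) = ((2 : ℝ) ^ j * (2 : ℝ) ^ k)⁻¹ := by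
    rw [show -(j : ℤ) - (k : ℤ) = -(((j + k : ℕ)) : ℤ) by push_cast; ring,
      zpow_neg, zpow_natCast, pow_add]
  calc (2 : ℝ) ^ (-(j : ℤ) - (k : ℤ)) * c *
        ((a ^ (-((j - k : ℕ) : ℤ)) + ε * b ^ (-((j - k : ℕ) : ℤ))) * (a * b) ^ j)
      = c * ((a ^ (-((j - k : ℕ) : ℤ)) * a ^ j) * b ^ j
          + ε * ((b ^ (-((j - k : ℕ) : ℤ)) * b ^ j) * a ^ j)) * ((2 : ℝ) ^ j * (2 : ℝ) ^ k)⁻¹ := by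
        rw [h2, mul_pow]; ring
    _ = c * (a ^ k * b ^ j + ε * (b ^ k * a ^ j)) * ((2 : ℝ) ^ j * (2 : ℝ) ^ k)⁻¹ := by
        rw [hzp a ha, hzp b hb]
    _ = c * ((a / 2) ^ k * (b / 2) ^ j + ε * ((b / 2) ^ k * (a / 2) ^ j)) := by
        rw [div_pow, div_pow, div_pow, div_pow]
        field_simp

theorem partial_fraction_decomposition (n j : ℕ) (hnj : n < 2 * j)
    (t : ℝ) (ht : |t| < 1) :
    t ^ n / (1 - t ^ 2) ^ j =
      ∑ i ∈ Finset.Icc 1 j, betaCoef n j i * phiAB i (n % 2) t := by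
  have hj : 0 < j := by omega
  have ht1 : -1 < t := (abs_lt.mp ht).1
  have ht2 : t < 1 := (abs_lt.mp ht).2
  have ha : (0 : ℝ) < 1 - t := by linarith
  have hb : (0 : ℝ) < 1 + t := by linarith
  have habs : (0 : ℝ) < 1 - t ^ 2 := by nlinarith
  have hev := congrArg (Polynomial.eval ((1 - t) / 2)) (key_poly n j hnj)
  simp only [eval_pow, eval_add, eval_sub, eval_mul, eval_one, eval_C, eval_X,
    eval_finset_sum, eval_neg] at hev
  rw [show (1 : ℝ) + -2 * ((1 - t) / 2) = t by ring] at hev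
  rw [show (1 : ℝ) - (1 - t) / 2 = (1 + t) / 2 by ring] at hev
  rw [div_eq_iff (by positivity : ((1 : ℝ) - t ^ 2) ^ j ≠ 0), hev, Finset.sum_mul]
  refine Finset.sum_nbij' (fun k => j - k) (fun i => j - i) ?_ ?_ ?_ ?_ ?_
  · intro k hk
    simp only [Finset.mem_range] at hk
    simp only [Finset.mem_Icc]
    omega
  · intro i hi
    simp only [Finset.mem_Icc] at hi
    simp only [Finset.mem_range]
    omega
  · intro k hk
    simp only [Finset.mem_range] at hk
    show j - (j - k) = k
    omega
  · intro i hi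
    simp only [Finset.mem_Icc] at hi
    show j - (j - i) = i
    omega
  · intro k hk
    simp only [Finset.mem_range] at hk
    have hjk : j - (j - k) = k := by omega
    have hbeta : betaCoef n j (j - k) = 2 ^ (-(j : ℤ) - (k : ℤ)) * cCoef n j k := by
      rw [betaCoef, hjk]
      rfl
    have hphi : phiAB (j - k) (n % 2) t
        = (1 - t) ^ (-((j - k : ℕ) : ℤ)) + (-1 : ℝ) ^ n * (1 + t) ^ (-((j - k : ℕ) : ℤ)) := by
      rw [phiAB, neg_one_pow_mod]
    show cCoef n j k * (((1 - t) / 2) ^ k * ((1 + t) / 2) ^ j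
          + (-1) ^ n * (((1 + t) / 2) ^ k * ((1 - t) / 2) ^ j))
        = betaCoef n j (j - k) * phiAB (j - k) (n % 2) t * (1 - t ^ 2) ^ j
    rw [hbeta, hphi, show (1 : ℝ) - t ^ 2 = (1 - t) * (1 + t) by ring]
    have h := (term_eq (1 - t) (1 + t) (cCoef n j k) ((-1 : ℝ) ^ n) ha.ne' hb.ne' j k
      (by omega)).symm
    linear_combination h
end

section
/- Let n < 2j be non-negative integers, and let β_{j-k} := 2^{-j-k} Σ_{i=0}^{k} (-2)^i C(n,i) C(k+j-1-i, j-1) for 0 ≤ k ≤ j-1. Then β_j = 2^{-j} and these coefficients satisfy the recurrence β_{j-k} = (-1)^k 2^{-j} C(n,k) - Σ_{i=0}^{k-1} (-2)^{i-k} C(j, k-i) β_{j-i} for k = 1, ..., j-1. -/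
/-!
Up to the factor `2 ^ (j + i)`, `β_{j-i}` is the `i`-th coefficient of the power series
`(1 - 2X)ⁿ (1 - X)⁻ʲ`. Multiplying it by `(1 - X)ʲ` leaves `(1 - 2X)ⁿ`, so comparing `k`-th
coefficients gives `∑_{i ≤ k} (-1)^(k-i) C(j, k-i) 2^(j+i) β_{j-i} = (-2)^k C(n, k)`;
the recurrence is this identity solved for its last term `i = k`.
-/

open Finset

namespace PowerSeries

variable {R : Type*} [CommRing R]

theorem coeff_one_sub_C_mul_X_pow (a : R) (M n : ℕ) :
    coeff n ((1 - C a * X) ^ M : R⟦X⟧) = (-a) ^ n * M.choose n := by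
  have : (1 - C a * X : R⟦X⟧) ^ M = rescale (-a) ((Polynomial.X + 1) ^ M : Polynomial R) := by
    simp [rescale_X, sub_eq_add_neg, add_comm]
  rw [this, coeff_rescale, Polynomial.coeff_coe, Polynomial.coeff_X_add_one_pow]

theorem coeff_one_sub_X_pow (M n : ℕ) :
    coeff n ((1 - X) ^ M : R⟦X⟧) = (-1) ^ n * M.choose n := by
  simpa using coeff_one_sub_C_mul_X_pow (1 : R) M n

theorem coeff_invOneSubPow_val {d : ℕ} (hd : 0 < d) (m : ℕ) :
    coeff m (invOneSubPow R d).val = (d - 1 + m).choose (d - 1) := by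
  rw [invOneSubPow_val_eq_mk_sub_one_add_choose_of_pos R d hd, coeff_mk]

theorem one_sub_X_pow_mul_invOneSubPow_val (d : ℕ) :
    (1 - X : R⟦X⟧) ^ d * (invOneSubPow R d).val = 1 := by
  rw [← invOneSubPow_inv_eq_one_sub_pow]
  exact (invOneSubPow R d).inv_val

end PowerSeries

theorem neg_zpow_sub_mul_zpow_neg_sub {K : Type*} [Field K] {x : K} (hx : x ≠ 0) {i k : ℕ}
    (hik : i ≤ k) (j : ℤ) :
    (-x) ^ ((i : ℤ) - k) * x ^ (-j - i) = (-1) ^ (k - i) * x ^ (-j - k) := by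
  obtain ⟨m, rfl⟩ := Nat.exists_eq_add_of_le hik
  rw [neg_eq_neg_one_mul, mul_zpow, mul_assoc, ← zpow_add₀ hx]
  push_cast
  rw [show (i : ℤ) - (i + m) = -(m : ℤ) by ring, show -(m : ℤ) + (-j - i) = -j - (i + m) by ring,
    Nat.add_sub_cancel_left, zpow_neg, zpow_natCast, ← inv_pow, inv_neg_one]

open PowerSeries

noncomputable def betaSeries (n j : ℕ) : ℝ⟦X⟧ :=
  (1 - C 2 * X) ^ n * (invOneSubPow ℝ j).val

theorem one_sub_X_pow_mul_betaSeries (n j : ℕ) :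
    (1 - X) ^ j * betaSeries n j = (1 - C 2 * X) ^ n := by
  rw [betaSeries, mul_left_comm, one_sub_X_pow_mul_invOneSubPow_val, mul_one]

theorem betaCoef_sub_eq_zpow_mul_coeff_betaSeries (n : ℕ) {j i : ℕ} (hj : 0 < j) (hi : i ≤ j) :
    betaCoef n j (j - i) = 2 ^ (-(j : ℤ) - i) * coeff i (betaSeries n j) := by
  rw [betaCoef, Nat.sub_sub_self hi, betaSeries, coeff_mul,
    Finset.Nat.sum_antidiagonal_eq_sum_range_succ (fun p q ↦ coeff p ((1 - C (2 : ℝ) * X) ^ n) *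
      coeff q (invOneSubPow ℝ j).val)]
  congr 1
  refine sum_congr rfl fun l hl ↦ ?_
  rw [coeff_one_sub_C_mul_X_pow, coeff_invOneSubPow_val hj,
    show i + j - 1 - l = j - 1 + (i - l) by grind]

theorem sum_neg_one_pow_mul_choose_mul_coeff_betaSeries (n j k : ℕ) :
    ∑ i ∈ range (k + 1), (-1 : ℝ) ^ (k - i) * j.choose (k - i) * coeff i (betaSeries n j) =
      (-2) ^ k * n.choose k := by
  rw [← coeff_one_sub_C_mul_X_pow, ← one_sub_X_pow_mul_betaSeries, mul_comm, coeff_mul,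
    Finset.Nat.sum_antidiagonal_eq_sum_range_succ (fun p q ↦ coeff p (betaSeries n j) *
      coeff q ((1 - X : ℝ⟦X⟧) ^ j))]
  refine sum_congr rfl fun i _ ↦ ?_
  rw [coeff_one_sub_X_pow]
  ring

theorem sum_zpow_mul_choose_mul_betaCoef (n : ℕ) {j k : ℕ} (hj : 0 < j) (hk : k ≤ j) :
    ∑ i ∈ range (k + 1), (-2 : ℝ) ^ ((i : ℤ) - k) * j.choose (k - i) * betaCoef n j (j - i) =
      (-1) ^ k * 2 ^ (-(j : ℤ)) * n.choose k := by
  calc ∑ i ∈ range (k + 1), (-2 : ℝ) ^ ((i : ℤ) - k) * j.choose (k - i) * betaCoef n j (j - i)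
      = 2 ^ (-(j : ℤ) - k) * ∑ i ∈ range (k + 1),
          (-1 : ℝ) ^ (k - i) * j.choose (k - i) * coeff i (betaSeries n j) := by
        rw [mul_sum]
        refine sum_congr rfl fun i hi ↦ ?_
        have hik : i ≤ k := Nat.lt_succ_iff.mp (mem_range.mp hi)
        rw [betaCoef_sub_eq_zpow_mul_coeff_betaSeries n hj (hik.trans hk)]
        linear_combination (j.choose (k - i) * coeff i (betaSeries n j) : ℝ) *
          neg_zpow_sub_mul_zpow_neg_sub (two_ne_zero (α := ℝ)) hik j
    _ = 2 ^ (-(j : ℤ) - k) * ((-2) ^ k * n.choose k) := by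
        rw [sum_neg_one_pow_mul_choose_mul_coeff_betaSeries]
    _ = (-1) ^ k * 2 ^ (-(j : ℤ)) * n.choose k := by
        rw [neg_pow, zpow_sub₀ two_ne_zero, zpow_natCast]
        field_simp

theorem betaCoef_recurrence_general (n j : ℕ) :
    betaCoef n j j = (2 : ℝ) ^ (-(j : ℤ)) ∧
    ∀ k : ℕ, 1 ≤ k → k ≤ j - 1 →
      betaCoef n j (j - k) =
        (-1 : ℝ) ^ k * (2 : ℝ) ^ (-(j : ℤ)) * (n.choose k) -
          ∑ i ∈ Finset.range k,
            (-2 : ℝ) ^ ((i : ℤ) - (k : ℤ)) * (j.choose (k - i)) * betaCoef n j (j - i) := by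
  refine ⟨by simp [betaCoef], fun k hk1 hkj ↦ ?_⟩
  have hsum := sum_zpow_mul_choose_mul_betaCoef n (j := j) (k := k) (by omega) (by omega)
  rw [sum_range_succ, sub_self, zpow_zero, Nat.sub_self, Nat.choose_zero_right, Nat.cast_one,
    one_mul, one_mul] at hsum
  linarith

theorem betaCoef_recurrence (n j : ℕ) (hnj : n < 2 * j) :
    betaCoef n j j = (2 : ℝ) ^ (-(j : ℤ)) ∧
    ∀ k : ℕ, 1 ≤ k → k ≤ j - 1 →
      betaCoef n j (j - k) =
        (-1 : ℝ) ^ k * (2 : ℝ) ^ (-(j : ℤ)) * (n.choose k) -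
          ∑ i ∈ Finset.range k,
            (-2 : ℝ) ^ ((i : ℤ) - (k : ℤ)) * (j.choose (k - i)) * betaCoef n j (j - i) :=
  betaCoef_recurrence_general n j
end

section
/- For 0 < ν and 0 ≤ λ ≤ 1 and 0 ≤ k < 1, with Π(λ,ν,k) = ∫_0^λ dt/((1+νt²)√((1-t²)(1-k²t²))), one has Π(λ,ν,k) = Π(1,ν,k) - (1/((1+ν)√(1-k²))) Π(√(1-λ²), -ν/(1+ν), √(-k²/(1-k²))), where the last Π is interpreted via its integral definition, which involves the modulus only through its square; that is, ∫_λ^1 dt/((1+νt²)√((1-t²)(1-k²t²))) = (1/((1+ν)√(1-k²))) ∫_0^{√(1-λ²)} du/((1 - (ν/(1+ν))u²)√((1-u²)(1 + (k²/(1-k²))u²))). -/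
open intervalIntegral Real MeasureTheory Set Filter Topology

set_option maxHeartbeats 1000000

noncomputable def ellF (ν k t : ℝ) : ℝ :=
  1 / ((1 + ν * t ^ 2) * Real.sqrt ((1 - t ^ 2) * (1 - k ^ 2 * t ^ 2)))

noncomputable def ellG (ν k u : ℝ) : ℝ :=
  1 / ((1 - (ν / (1 + ν)) * u ^ 2) *
    Real.sqrt ((1 - u ^ 2) * (1 + (k ^ 2 / (1 - k ^ 2)) * u ^ 2)))

lemma ellF_integrable (ν k : ℝ) (hν : 0 < ν) (hk0 : 0 ≤ k) (hk1 : k < 1) :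
    IntervalIntegrable (ellF ν k) volume 0 1 := by
  have hk2 : k ^ 2 < 1 := by nlinarith
  have hs : 0 < Real.sqrt (1 - k ^ 2) := Real.sqrt_pos.2 (by linarith)
  have base : IntervalIntegrable
      (fun t : ℝ => (1 / Real.sqrt (1 - k ^ 2)) * (1 - t) ^ (-(1/2) : ℝ)) volume 0 1 := by
    have h1 : IntervalIntegrable (fun x : ℝ => x ^ (-(1/2) : ℝ)) volume 1 0 :=
      intervalIntegral.intervalIntegrable_rpow' (by norm_num)
    have h2 := h1.comp_sub_left 1
    simp only [sub_self, sub_zero] at h2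
    exact h2.const_mul _
  refine base.mono_fun ?_ ?_
  · apply Measurable.aestronglyMeasurable
    unfold ellF
    fun_prop
  · filter_upwards [ae_restrict_mem measurableSet_uIoc] with t ht
    rw [Set.uIoc_of_le (by norm_num : (0:ℝ) ≤ 1)] at ht
    obtain ⟨ht0, ht1⟩ := ht
    have hRnn : 0 ≤ (1 / Real.sqrt (1 - k ^ 2)) * (1 - t) ^ (-(1/2) : ℝ) :=
      mul_nonneg (by positivity) (Real.rpow_nonneg (by linarith) _)
    rcases eq_or_lt_of_le ht1 with h | h
    · subst h
      simp [ellF, Real.zero_rpow, hRnn, abs_of_nonneg hRnn]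
    · have hFnn : 0 ≤ ellF ν k t := by
        unfold ellF; positivity
      rw [Real.norm_eq_abs, Real.norm_eq_abs, abs_of_nonneg hFnn, abs_of_nonneg hRnn]
      have hD : Real.sqrt ((1 - t) * (1 - k ^ 2)) ≤
          Real.sqrt ((1 - t ^ 2) * (1 - k ^ 2 * t ^ 2)) := by
        apply Real.sqrt_le_sqrt
        have e1 : 1 - t ≤ 1 - t ^ 2 := by nlinarith
        have e2 : 1 - k ^ 2 ≤ 1 - k ^ 2 * t ^ 2 := by nlinarith
        exact mul_le_mul e1 e2 (by linarith) (by nlinarith)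
      have hD0 : 0 < Real.sqrt ((1 - t) * (1 - k ^ 2)) :=
        Real.sqrt_pos.2 (by nlinarith)
      have hden : Real.sqrt ((1 - t) * (1 - k ^ 2)) ≤
          (1 + ν * t ^ 2) * Real.sqrt ((1 - t ^ 2) * (1 - k ^ 2 * t ^ 2)) := by
        calc Real.sqrt ((1 - t) * (1 - k ^ 2)) ≤
            Real.sqrt ((1 - t ^ 2) * (1 - k ^ 2 * t ^ 2)) := hD
          _ ≤ (1 + ν * t ^ 2) * Real.sqrt ((1 - t ^ 2) * (1 - k ^ 2 * t ^ 2)) :=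
            le_mul_of_one_le_left (Real.sqrt_nonneg _) (by nlinarith)
      have : ellF ν k t ≤ 1 / Real.sqrt ((1 - t) * (1 - k ^ 2)) :=
        one_div_le_one_div_of_le hD0 hden
      refine this.trans (le_of_eq ?_)
      rw [Real.sqrt_mul (by linarith : (0:ℝ) ≤ 1 - t),
        Real.rpow_neg (by linarith : (0:ℝ) ≤ 1 - t), ← Real.sqrt_eq_rpow]
      rw [one_div, mul_inv, one_div, mul_comm]

lemma ellG_integrable (ν k : ℝ) (hν : 0 < ν) (hk0 : 0 ≤ k) (hk1 : k < 1) :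
    IntervalIntegrable (ellG ν k) volume 0 1 := by
  have hk2 : k ^ 2 < 1 := by nlinarith
  have hκ : 0 ≤ k ^ 2 / (1 - k ^ 2) := div_nonneg (sq_nonneg k) (by linarith)
  have hμ0 : 0 ≤ ν / (1 + ν) := div_nonneg hν.le (by linarith)
  have hμ1 : ν / (1 + ν) < 1 := by
    rw [div_lt_one (by linarith)]; linarith
  have base : IntervalIntegrable
      (fun t : ℝ => (1 / (1 - ν / (1 + ν))) * (1 - t) ^ (-(1/2) : ℝ)) volume 0 1 := by
    have h1 : IntervalIntegrable (fun x : ℝ => x ^ (-(1/2) : ℝ)) volume 1 0 :=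
      intervalIntegral.intervalIntegrable_rpow' (by norm_num)
    have h2 := h1.comp_sub_left 1
    simp only [sub_self, sub_zero] at h2
    exact h2.const_mul _
  refine base.mono_fun ?_ ?_
  · apply Measurable.aestronglyMeasurable
    unfold ellG
    fun_prop
  · filter_upwards [ae_restrict_mem measurableSet_uIoc] with u hu
    rw [Set.uIoc_of_le (by norm_num : (0:ℝ) ≤ 1)] at hu
    obtain ⟨hu0, hu1⟩ := hu
    have hRnn : 0 ≤ (1 / (1 - ν / (1 + ν))) * (1 - u) ^ (-(1/2) : ℝ) :=
      mul_nonneg (by rw [one_div]; exact inv_nonneg.2 (by linarith))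
        (Real.rpow_nonneg (by linarith) _)
    rcases eq_or_lt_of_le hu1 with h | h
    · subst h
      simp [ellG, Real.zero_rpow, abs_of_nonneg hRnn]
    · have hmul : ν / (1 + ν) * u ^ 2 ≤ ν / (1 + ν) :=
        mul_le_of_le_one_right hμ0 (by nlinarith)
      have hμu : 0 < 1 - ν / (1 + ν) * u ^ 2 := by linarith
      have hGnn : 0 ≤ ellG ν k u := by
        unfold ellG
        exact div_nonneg zero_le_one
          (mul_nonneg (by linarith) (Real.sqrt_nonneg _))
      rw [Real.norm_eq_abs, Real.norm_eq_abs, abs_of_nonneg hGnn, abs_of_nonneg hRnn]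
      have hD : Real.sqrt ((1 - u) * 1) ≤
          Real.sqrt ((1 - u ^ 2) * (1 + k ^ 2 / (1 - k ^ 2) * u ^ 2)) := by
        apply Real.sqrt_le_sqrt
        have e1 : 1 - u ≤ 1 - u ^ 2 := by nlinarith
        have e2 : (1:ℝ) ≤ 1 + k ^ 2 / (1 - k ^ 2) * u ^ 2 := by nlinarith
        exact mul_le_mul e1 e2 (by linarith) (by nlinarith)
      rw [mul_one] at hD
      have hD0 : 0 < Real.sqrt (1 - u) := Real.sqrt_pos.2 (by linarith)
      have hden : (1 - ν / (1 + ν)) * Real.sqrt (1 - u) ≤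
          (1 - ν / (1 + ν) * u ^ 2) *
            Real.sqrt ((1 - u ^ 2) * (1 + k ^ 2 / (1 - k ^ 2) * u ^ 2)) := by
        have h1 : 1 - ν / (1 + ν) ≤ 1 - ν / (1 + ν) * u ^ 2 := by linarith
        have h2 := hD
        nlinarith [Real.sqrt_nonneg (1 - u), Real.sqrt_nonneg
          ((1 - u ^ 2) * (1 + k ^ 2 / (1 - k ^ 2) * u ^ 2))]
      have hP : 0 < (1 - ν / (1 + ν)) * Real.sqrt (1 - u) :=
        mul_pos (by linarith) hD0
      have : ellG ν k u ≤ 1 / ((1 - ν / (1 + ν)) * Real.sqrt (1 - u)) :=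
        one_div_le_one_div_of_le hP hden
      refine this.trans (le_of_eq ?_)
      rw [Real.rpow_neg (by linarith : (0:ℝ) ≤ 1 - u), ← Real.sqrt_eq_rpow]
      rw [one_div, mul_inv, one_div, mul_comm]

lemma key_eq (ν k : ℝ) (hν : 0 < ν) (hk0 : 0 ≤ k) (hk1 : k < 1)
    (x : ℝ) (hx0 : 0 < x) (hx1 : x < 1) :
    (-x / Real.sqrt (1 - x ^ 2)) * ellF ν k (Real.sqrt (1 - x ^ 2)) =
      -((1 / ((1 + ν) * Real.sqrt (1 - k ^ 2))) * ellG ν k x) := by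
  have hk2 : k ^ 2 < 1 := by nlinarith
  have hq : (0:ℝ) < 1 - x ^ 2 := by nlinarith
  have hsq : Real.sqrt (1 - x ^ 2) ^ 2 = 1 - x ^ 2 := Real.sq_sqrt hq.le
  have hsq0 : Real.sqrt (1 - x ^ 2) ≠ 0 := (Real.sqrt_pos.2 hq).ne'
  have hk2' : (1:ℝ) - k ^ 2 ≠ 0 := by linarith
  have hsk : Real.sqrt (1 - k ^ 2) ≠ 0 := (Real.sqrt_pos.2 (by linarith)).ne'
  have h1ν : (1:ℝ) + ν ≠ 0 := by linarith
  have hκ : 0 ≤ k ^ 2 / (1 - k ^ 2) := div_nonneg (sq_nonneg k) (by linarith)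
  have hsκ : Real.sqrt (1 + k ^ 2 / (1 - k ^ 2) * x ^ 2) ≠ 0 :=
    (Real.sqrt_pos.2 (by nlinarith)).ne'
  have hμ0 : 0 ≤ ν / (1 + ν) := div_nonneg hν.le (by linarith)
  have hμ1 : ν / (1 + ν) < 1 := by rw [div_lt_one (by linarith)]; linarith
  have hμx : 1 - ν / (1 + ν) * x ^ 2 ≠ 0 := by
    have : ν / (1 + ν) * x ^ 2 ≤ ν / (1 + ν) :=
      mul_le_of_le_one_right hμ0 (by nlinarith)
    have : 0 < 1 - ν / (1 + ν) * x ^ 2 := by linarith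
    exact this.ne'
  unfold ellF ellG
  rw [hsq,
    show (1 - (1 - x ^ 2)) * (1 - k ^ 2 * (1 - x ^ 2)) =
        x ^ 2 * ((1 - k ^ 2) * (1 + k ^ 2 / (1 - k ^ 2) * x ^ 2)) from by
      field_simp; ring,
    Real.sqrt_mul (sq_nonneg x), Real.sqrt_sq hx0.le,
    Real.sqrt_mul (by linarith : (0:ℝ) ≤ 1 - k ^ 2),
    show (1:ℝ) + ν * (1 - x ^ 2) = (1 + ν) * (1 - ν / (1 + ν) * x ^ 2) from by
      field_simp; ring,
    Real.sqrt_mul hq.le]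
  set S1 := Real.sqrt (1 - x ^ 2) with hS1
  set S2 := Real.sqrt (1 - k ^ 2) with hS2
  set S3 := Real.sqrt (1 + k ^ 2 / (1 - k ^ 2) * x ^ 2) with hS3
  have hx' : x ≠ 0 := hx0.ne'
  have hE : (1:ℝ) + ν - ν * x ^ 2 ≠ 0 := by nlinarith
  have hB : 1 - ν / (1 + ν) * x ^ 2 = (1 + ν - ν * x ^ 2) / (1 + ν) := by
    field_simp
  rw [hB]
  field_simp [hx', hsq0, hsk, hsκ, h1ν, hE]

lemma core_subst (ν k : ℝ) (hν : 0 < ν) (hk0 : 0 ≤ k) (hk1 : k < 1)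
    (s r : ℝ) (hs : 0 < s) (hsr : s ≤ r) (hr : r < 1) :
    ∫ t in s..r, ellF ν k t =
      (1 / ((1 + ν) * Real.sqrt (1 - k ^ 2))) *
        ∫ u in Real.sqrt (1 - r ^ 2)..Real.sqrt (1 - s ^ 2), ellG ν k u := by
  have hk2 : k ^ 2 < 1 := by nlinarith
  have hr0 : 0 < r := lt_of_lt_of_le hs hsr
  set a := Real.sqrt (1 - r ^ 2) with ha_def
  set b := Real.sqrt (1 - s ^ 2) with hb_def
  have ha2 : a ^ 2 = 1 - r ^ 2 := Real.sq_sqrt (by nlinarith)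
  have hb2 : b ^ 2 = 1 - s ^ 2 := Real.sq_sqrt (by nlinarith)
  have ha0 : 0 < a := Real.sqrt_pos.2 (by nlinarith)
  have hab : a ≤ b := Real.sqrt_le_sqrt (by nlinarith)
  have hb1 : b < 1 := by nlinarith [Real.sqrt_nonneg (1 - s ^ 2)]
  have huIcc : uIcc a b = Icc a b := uIcc_of_le hab
  have hmem : ∀ x ∈ Icc a b, 0 < x ∧ x < 1 := fun x hx =>
    ⟨lt_of_lt_of_le ha0 hx.1, lt_of_le_of_lt hx.2 hb1⟩
  have φa : Real.sqrt (1 - a ^ 2) = r := by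
    rw [ha2, show (1:ℝ) - (1 - r ^ 2) = r ^ 2 by ring, Real.sqrt_sq hr0.le]
  have φb : Real.sqrt (1 - b ^ 2) = s := by
    rw [hb2, show (1:ℝ) - (1 - s ^ 2) = s ^ 2 by ring, Real.sqrt_sq hs.le]
  have hcont_inner : Continuous fun u : ℝ => 1 - u ^ 2 :=
    continuous_const.sub (continuous_pow 2)
  have hf : ContinuousOn (fun u : ℝ => Real.sqrt (1 - u ^ 2)) (uIcc a b) :=
    (Real.continuous_sqrt.comp hcont_inner).continuousOn
  have hff' : ∀ x ∈ Ioo (a ⊓ b) (a ⊔ b),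
      HasDerivWithinAt (fun u : ℝ => Real.sqrt (1 - u ^ 2))
        (-x / Real.sqrt (1 - x ^ 2)) (Ioi x) x := by
    intro x hx
    rw [min_eq_left hab, max_eq_right hab] at hx
    obtain ⟨hx0, hx1⟩ := hmem x (Ioo_subset_Icc_self hx)
    have hq : (0:ℝ) < 1 - x ^ 2 := by nlinarith
    have h1 : HasDerivAt (fun u : ℝ => 1 - u ^ 2) (-(2 * x)) x := by
      simpa using (hasDerivAt_pow 2 x).const_sub 1
    have h2 := (Real.hasDerivAt_sqrt hq.ne').comp x h1
    have : (1 / (2 * Real.sqrt (1 - x ^ 2))) * (-(2 * x)) =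
        -x / Real.sqrt (1 - x ^ 2) := by
      have := (Real.sqrt_pos.2 hq).ne'
      field_simp
    rw [← this]
    exact h2.hasDerivWithinAt
  have hf' : ContinuousOn (fun x : ℝ => -x / Real.sqrt (1 - x ^ 2)) (uIcc a b) := by
    apply ContinuousOn.div (continuous_neg.continuousOn)
      (Real.continuous_sqrt.comp hcont_inner).continuousOn
    intro x hx
    rw [huIcc] at hx
    obtain ⟨hx0, hx1⟩ := hmem x hx
    exact (Real.sqrt_pos.2 (show (0:ℝ) < 1 - x ^ 2 by nlinarith)).ne'
  have himg : (fun u : ℝ => Real.sqrt (1 - u ^ 2)) '' uIcc a b ⊆ Icc s r := by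
    rintro _ ⟨x, hx, rfl⟩
    rw [huIcc] at hx
    constructor
    · rw [← φb]
      apply Real.sqrt_le_sqrt
      have h1 : x ^ 2 ≤ b ^ 2 := pow_le_pow_left₀ (le_of_lt (lt_of_lt_of_le ha0 hx.1)) hx.2 2
      linarith
    · rw [← φa]
      apply Real.sqrt_le_sqrt
      have h1 : a ^ 2 ≤ x ^ 2 := pow_le_pow_left₀ ha0.le hx.1 2
      linarith
  have hg : ContinuousOn (ellF ν k) ((fun u : ℝ => Real.sqrt (1 - u ^ 2)) '' uIcc a b) := by
    refine ContinuousOn.mono ?_ himg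
    unfold ellF
    apply ContinuousOn.div continuousOn_const
    · exact ((continuous_const.add (continuous_const.mul (continuous_pow 2))).mul
        (Real.continuous_sqrt.comp (hcont_inner.mul
          (continuous_const.sub (continuous_const.mul (continuous_pow 2)))))).continuousOn
    · intro t ht
      have ht1 : t < 1 := lt_of_le_of_lt ht.2 hr
      have ht0 : 0 < t := lt_of_lt_of_le hs ht.1
      have h1 : 0 < 1 + ν * t ^ 2 := by nlinarith
      have h2 : 0 < Real.sqrt ((1 - t ^ 2) * (1 - k ^ 2 * t ^ 2)) := by
        apply Real.sqrt_pos.2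
        apply mul_pos <;> nlinarith
      exact (mul_pos h1 h2).ne'
  have main := intervalIntegral.integral_comp_smul_deriv'' hf hff' hf' hg
  rw [φa, φb] at main
  have congr1 : ∫ x in a..b, (-x / Real.sqrt (1 - x ^ 2)) •
      ((ellF ν k) ∘ fun u : ℝ => Real.sqrt (1 - u ^ 2)) x =
      ∫ x in a..b, -((1 / ((1 + ν) * Real.sqrt (1 - k ^ 2))) * ellG ν k x) := by
    apply intervalIntegral.integral_congr
    intro x hx
    rw [huIcc] at hx
    obtain ⟨hx0, hx1⟩ := hmem x hx
    simp only [smul_eq_mul, Function.comp]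
    exact key_eq ν k hν hk0 hk1 x hx0 hx1
  rw [congr1] at main
  rw [intervalIntegral.integral_neg, intervalIntegral.integral_const_mul,
    intervalIntegral.integral_symm s r] at main
  linarith [main]

lemma stepA (ν k : ℝ) (hν : 0 < ν) (hk0 : 0 ≤ k) (hk1 : k < 1)
    (s : ℝ) (hs0 : 0 < s) (hs1 : s < 1) :
    ∫ t in s..(1:ℝ), ellF ν k t =
      (1 / ((1 + ν) * Real.sqrt (1 - k ^ 2))) *
        ∫ u in (0:ℝ)..Real.sqrt (1 - s ^ 2), ellG ν k u := by
  set c := 1 / ((1 + ν) * Real.sqrt (1 - k ^ 2)) with hc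
  set b := Real.sqrt (1 - s ^ 2) with hb_def
  have hb0 : 0 ≤ b := Real.sqrt_nonneg _
  have hb1 : b ≤ 1 := Real.sqrt_le_one.2 (by nlinarith)
  have hFi : IntervalIntegrable (ellF ν k) volume s 1 :=
    (ellF_integrable ν k hν hk0 hk1).mono_set
      (by rw [uIcc_of_le hs1.le, uIcc_of_le (by norm_num : (0:ℝ) ≤ 1)]
          exact Icc_subset_Icc hs0.le le_rfl)
  have hGi : IntervalIntegrable (ellG ν k) volume 0 b :=
    (ellG_integrable ν k hν hk0 hk1).mono_set
      (by rw [uIcc_of_le hb0, uIcc_of_le (by norm_num : (0:ℝ) ≤ 1)]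
          exact Icc_subset_Icc le_rfl hb1)
  have hIoo : Ioo s 1 ∈ 𝓝[<] (1:ℝ) := Ioo_mem_nhdsLT_of_mem ⟨hs1, le_rfl⟩
  -- LHS limit
  have t1 : Tendsto (fun r => ∫ t in s..r, ellF ν k t) (𝓝[<] (1:ℝ))
      (𝓝 (∫ t in s..1, ellF ν k t)) := by
    have hcont : ContinuousOn (fun r => ∫ t in s..r, ellF ν k t) (Icc s 1) := by
      have := intervalIntegral.continuousOn_primitive_interval' hFi
        (left_mem_uIcc (a := s) (b := 1))
      rwa [uIcc_of_le hs1.le] at this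
    have h := (hcont 1 (right_mem_Icc.2 hs1.le)).tendsto
    rw [← nhdsWithin_Ioo_eq_nhdsLT hs1]
    exact h.mono_left (nhdsWithin_mono _ Ioo_subset_Icc_self)
  -- RHS limit
  have t2 : Tendsto (fun r => c * ∫ u in Real.sqrt (1 - r ^ 2)..b, ellG ν k u)
      (𝓝[<] (1:ℝ)) (𝓝 (c * ∫ u in (0:ℝ)..b, ellG ν k u)) := by
    have hcont2 : ContinuousOn (fun x => ∫ u in x..b, ellG ν k u) (Icc 0 b) := by
      have := intervalIntegral.continuousOn_primitive_interval_left
        (f := ellG ν k) (a := 0) (b := b)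
        (by rw [uIcc_of_le hb0]
            exact (intervalIntegrable_iff_integrableOn_Icc_of_le hb0).1 hGi)
      rwa [uIcc_of_le hb0] at this
    have hφ : Tendsto (fun r : ℝ => Real.sqrt (1 - r ^ 2)) (𝓝[<] (1:ℝ))
        (𝓝[Icc 0 b] 0) := by
      apply tendsto_nhdsWithin_of_tendsto_nhds_of_eventually_within
      · have : Tendsto (fun r : ℝ => Real.sqrt (1 - r ^ 2)) (𝓝 1) (𝓝 0) := by
          have hc' : Continuous fun r : ℝ => Real.sqrt (1 - r ^ 2) :=
            Real.continuous_sqrt.comp (continuous_const.sub (continuous_pow 2))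
          have := hc'.tendsto 1
          simpa using this
        exact this.mono_left nhdsWithin_le_nhds
      · filter_upwards [hIoo] with r hr
        refine ⟨Real.sqrt_nonneg _, ?_⟩
        rw [hb_def]
        exact Real.sqrt_le_sqrt (by nlinarith [hr.1, hr.2, hs0])
    exact ((hcont2 0 (left_mem_Icc.2 hb0)).tendsto.comp hφ).const_mul c
  -- equality eventually
  have heq : (fun r => ∫ t in s..r, ellF ν k t) =ᶠ[𝓝[<] (1:ℝ)]
      (fun r => c * ∫ u in Real.sqrt (1 - r ^ 2)..b, ellG ν k u) := by
    filter_upwards [hIoo] with r hr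
    exact core_subst ν k hν hk0 hk1 s r hs0 hr.1.le hr.2
  exact tendsto_nhds_unique (t1.congr' heq) t2

theorem tail_integral_substitution (ν k lam : ℝ) (hν : 0 < ν)
    (hk0 : 0 ≤ k) (hk1 : k < 1) (hlam0 : 0 ≤ lam) (hlam1 : lam ≤ 1) :
    ∫ t in lam..(1 : ℝ),
        1 / ((1 + ν * t ^ 2) * Real.sqrt ((1 - t ^ 2) * (1 - k ^ 2 * t ^ 2))) =
      (1 / ((1 + ν) * Real.sqrt (1 - k ^ 2))) *
        ∫ u in (0 : ℝ)..Real.sqrt (1 - lam ^ 2),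
          1 / ((1 - (ν / (1 + ν)) * u ^ 2) *
            Real.sqrt ((1 - u ^ 2) * (1 + (k ^ 2 / (1 - k ^ 2)) * u ^ 2))) := by
  show ∫ t in lam..(1:ℝ), ellF ν k t =
    (1 / ((1 + ν) * Real.sqrt (1 - k ^ 2))) *
      ∫ u in (0:ℝ)..Real.sqrt (1 - lam ^ 2), ellG ν k u
  rcases eq_or_lt_of_le hlam1 with h1 | hlt
  · subst h1
    rw [show (1:ℝ) - 1 ^ 2 = 0 by norm_num, Real.sqrt_zero]
    simp
  set c := 1 / ((1 + ν) * Real.sqrt (1 - k ^ 2)) with hc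
  have hFI : IntegrableOn (ellF ν k) (uIcc lam 1) volume := by
    rw [uIcc_of_le hlam1]
    refine ((intervalIntegrable_iff_integrableOn_Icc_of_le (by norm_num : (0:ℝ) ≤ 1)).1
      (ellF_integrable ν k hν hk0 hk1)).mono ?_ le_rfl
    exact Icc_subset_Icc hlam0 le_rfl
  have hGi : IntervalIntegrable (ellG ν k) volume 0 1 := ellG_integrable ν k hν hk0 hk1
  have hIoo : Ioo lam 1 ∈ 𝓝[>] lam := Ioo_mem_nhdsGT_of_mem ⟨le_rfl, hlt⟩
  have t1 : Tendsto (fun s => ∫ t in s..(1:ℝ), ellF ν k t) (𝓝[>] lam)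
      (𝓝 (∫ t in lam..(1:ℝ), ellF ν k t)) := by
    have hcont : ContinuousOn (fun x => ∫ t in x..(1:ℝ), ellF ν k t) (Icc lam 1) := by
      have := intervalIntegral.continuousOn_primitive_interval_left
        (f := ellF ν k) (a := lam) (b := 1) hFI
      rwa [uIcc_of_le hlam1] at this
    have h := (hcont lam (left_mem_Icc.2 hlam1)).tendsto
    rw [← nhdsWithin_Ioo_eq_nhdsGT hlt]
    exact h.mono_left (nhdsWithin_mono _ Ioo_subset_Icc_self)
  have t2 : Tendsto (fun s : ℝ => c * ∫ u in (0:ℝ)..Real.sqrt (1 - s ^ 2), ellG ν k u)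
      (𝓝[>] lam) (𝓝 (c * ∫ u in (0:ℝ)..Real.sqrt (1 - lam ^ 2), ellG ν k u)) := by
    have hcont2 : ContinuousOn (fun y => ∫ u in (0:ℝ)..y, ellG ν k u) (Icc 0 1) := by
      have := intervalIntegral.continuousOn_primitive_interval' hGi
        (left_mem_uIcc (a := (0:ℝ)) (b := 1))
      rwa [uIcc_of_le (by norm_num : (0:ℝ) ≤ 1)] at this
    have hmem : Real.sqrt (1 - lam ^ 2) ∈ Icc (0:ℝ) 1 :=
      ⟨Real.sqrt_nonneg _, Real.sqrt_le_one.2 (by nlinarith)⟩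
    have hφ : Tendsto (fun s : ℝ => Real.sqrt (1 - s ^ 2)) (𝓝[>] lam)
        (𝓝[Icc 0 1] (Real.sqrt (1 - lam ^ 2))) := by
      apply tendsto_nhdsWithin_of_tendsto_nhds_of_eventually_within
      · have hc' : Continuous fun s : ℝ => Real.sqrt (1 - s ^ 2) :=
          Real.continuous_sqrt.comp (continuous_const.sub (continuous_pow 2))
        exact (hc'.tendsto lam).mono_left nhdsWithin_le_nhds
      · filter_upwards [hIoo] with s hs
        exact ⟨Real.sqrt_nonneg _, Real.sqrt_le_one.2 (by nlinarith [hs.1, hlam0])⟩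
    exact ((hcont2 _ hmem).tendsto.comp hφ).const_mul c
  have heq : (fun s => ∫ t in s..(1:ℝ), ellF ν k t) =ᶠ[𝓝[>] lam]
      (fun s : ℝ => c * ∫ u in (0:ℝ)..Real.sqrt (1 - s ^ 2), ellG ν k u) := by
    filter_upwards [hIoo] with s hs
    exact stepA ν k hν hk0 hk1 s (lt_of_le_of_lt hlam0 hs.1) hs.2
  exact tendsto_nhds_unique (t1.congr' heq) t2
end

section
/- For every real N > 0 and every λ ∈ (0,1): ∫_0^λ t^{2N}/(1-t²)^{N+1} dt ≤ λ^{2N+1}/(2N(1-λ²)^N). -/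
open intervalIntegral Real

theorem integral_bound (N : ℝ) (hN : 0 < N) (lam : ℝ) (h0 : 0 < lam) (h1 : lam < 1) :
    ∫ t in (0 : ℝ)..lam, t ^ (2 * N) / (1 - t ^ 2) ^ (N + 1) ≤
      lam ^ (2 * N + 1) / (2 * N * (1 - lam ^ 2) ^ N) := by
  set F : ℝ → ℝ := fun t => t ^ (2 * N + 1) * (1 - t ^ 2) ^ (-N) / (2 * N) with hFdef
  set F' : ℝ → ℝ := fun t =>
    ((2 * N + 1) * t ^ (2 * N) * (1 - t ^ 2) ^ (-N)
      + t ^ (2 * N + 1) * (-N * (1 - t ^ 2) ^ (-N - 1) * (-(2 * t)))) / (2 * N) with hF'def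
  have hNe : (2 : ℝ) * N ≠ 0 := by positivity
  have hupos : ∀ t ∈ Set.Icc (0:ℝ) lam, 0 < 1 - t ^ 2 := by
    intro t ht
    have := ht.1; have := ht.2; nlinarith
  have hderiv : ∀ t ∈ Set.Icc (0:ℝ) lam, HasDerivAt F (F' t) t := by
    intro t ht
    have hu := hupos t ht
    have hd1 : HasDerivAt (fun t : ℝ => t ^ (2 * N + 1)) ((2 * N + 1) * t ^ (2 * N)) t := by
      have h := Real.hasDerivAt_rpow_const (x := t) (p := 2 * N + 1) (Or.inr (by linarith))
      convert h using 2
      ring_nf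
    have hinner : HasDerivAt (fun t : ℝ => 1 - t ^ 2) (-(2 * t)) t := by
      simpa using ((hasDerivAt_pow 2 t).const_sub 1)
    have hd2 : HasDerivAt (fun t : ℝ => (1 - t ^ 2) ^ (-N))
        (-N * (1 - t ^ 2) ^ (-N - 1) * (-(2 * t))) t := by
      have houter := Real.hasDerivAt_rpow_const (x := 1 - t ^ 2) (p := -N) (Or.inl hu.ne')
      exact houter.comp t hinner
    exact (hd1.mul hd2).div_const (2 * N)
  have hcont1 : ContinuousOn (fun t : ℝ => t ^ (2 * N) / (1 - t ^ 2) ^ (N + 1))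
      (Set.Icc 0 lam) := by
    apply ContinuousOn.div
    · exact fun x hx => (Real.continuousAt_rpow_const x _ (Or.inr (by positivity))).continuousWithinAt
    · exact ((continuous_const.sub (continuous_pow 2)).continuousOn).rpow_const
        (fun x hx => Or.inl (hupos x hx).ne')
    · intro x hx; exact (Real.rpow_pos_of_pos (hupos x hx) _).ne'
  have cA : ContinuousOn (fun t : ℝ => t ^ (2 * N)) (Set.Icc 0 lam) := fun x hx =>
    (Real.continuousAt_rpow_const x _ (Or.inr (by positivity))).continuousWithinAt
  have cB : ContinuousOn (fun t : ℝ => t ^ (2 * N + 1)) (Set.Icc 0 lam) := fun x hx =>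
    (Real.continuousAt_rpow_const x _ (Or.inr (by positivity))).continuousWithinAt
  have cC : ContinuousOn (fun t : ℝ => (1 - t ^ 2) ^ (-N)) (Set.Icc 0 lam) :=
    ((continuous_const.sub (continuous_pow 2)).continuousOn).rpow_const
      (fun x hx => Or.inl (hupos x hx).ne')
  have cD : ContinuousOn (fun t : ℝ => (1 - t ^ 2) ^ (-N - 1)) (Set.Icc 0 lam) :=
    ((continuous_const.sub (continuous_pow 2)).continuousOn).rpow_const
      (fun x hx => Or.inl (hupos x hx).ne')
  have hcontF' : ContinuousOn F' (Set.Icc 0 lam) := by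
    apply ContinuousOn.div_const
    exact ((continuousOn_const.mul cA).mul cC).add
      (cB.mul ((continuousOn_const.mul cD).mul
        (continuous_const.mul continuous_id).neg.continuousOn))
  have hIcc : Set.uIcc (0:ℝ) lam = Set.Icc 0 lam := Set.uIcc_of_le h0.le
  have hint1 : IntervalIntegrable (fun t : ℝ => t ^ (2 * N) / (1 - t ^ 2) ^ (N + 1))
      MeasureTheory.volume 0 lam := (by rwa [hIcc] : ContinuousOn _ (Set.uIcc 0 lam)).intervalIntegrable
  have hint2 : IntervalIntegrable F' MeasureTheory.volume 0 lam :=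
    (by rwa [hIcc] : ContinuousOn F' (Set.uIcc 0 lam)).intervalIntegrable
  have hle : ∀ t ∈ Set.Icc (0:ℝ) lam, t ^ (2 * N) / (1 - t ^ 2) ^ (N + 1) ≤ F' t := by
    intro t ht
    have hu := hupos t ht
    rcases eq_or_lt_of_le ht.1 with h0t | h0t
    · rw [← h0t]
      simp [hF'def, Real.zero_rpow hNe, Real.zero_rpow (show 2 * N + 1 ≠ 0 by positivity)]
    · have ha : 0 < t ^ (2 * N) := Real.rpow_pos_of_pos h0t _
      have hc : 0 < (1 - t ^ 2) ^ (-N - 1) := Real.rpow_pos_of_pos hu _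
      have e1 : t ^ (2 * N + 1) = t ^ (2 * N) * t := by
        rw [Real.rpow_add h0t, Real.rpow_one]
      have e2 : (1 - t ^ 2) ^ (-N) = (1 - t ^ 2) ^ (-N - 1) * (1 - t ^ 2) := by
        have h := Real.rpow_add hu (-N - 1) 1
        rw [Real.rpow_one] at h
        convert h using 2
        ring
      have hL : t ^ (2 * N) / (1 - t ^ 2) ^ (N + 1)
          = t ^ (2 * N) * (1 - t ^ 2) ^ (-N - 1) := by
        rw [div_eq_iff (Real.rpow_pos_of_pos hu (N + 1)).ne', mul_assoc,
          ← Real.rpow_add hu]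
        norm_num
      rw [hL]
      simp only [hF'def]
      rw [e1, e2, le_div_iff₀ (show (0:ℝ) < 2 * N by positivity)]
      nlinarith [mul_pos ha hc, mul_pos (mul_pos ha hc) hu, sq_nonneg t]
  have key : ∫ t in (0:ℝ)..lam, F' t = F lam - F 0 := by
    apply intervalIntegral.integral_eq_sub_of_hasDerivAt
    · intro t ht
      exact hderiv t (by rwa [hIcc] at ht)
    · exact hint2
  have hmono : (∫ t in (0:ℝ)..lam, t ^ (2 * N) / (1 - t ^ 2) ^ (N + 1))
      ≤ ∫ t in (0:ℝ)..lam, F' t :=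
    intervalIntegral.integral_mono_on h0.le hint1 hint2 hle
  have hF0 : F 0 = 0 := by
    simp [hFdef, Real.zero_rpow (show 2 * N + 1 ≠ 0 by positivity)]
  have hulam : (0:ℝ) < 1 - lam ^ 2 := by nlinarith
  have hFlam : F lam = lam ^ (2 * N + 1) / (2 * N * (1 - lam ^ 2) ^ N) := by
    simp only [hFdef]
    rw [Real.rpow_neg hulam.le]
    ring
  calc (∫ t in (0:ℝ)..lam, t ^ (2 * N) / (1 - t ^ 2) ^ (N + 1))
      ≤ ∫ t in (0:ℝ)..lam, F' t := hmono
    _ = F lam - F 0 := key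
    _ = lam ^ (2 * N + 1) / (2 * N * (1 - lam ^ 2) ^ N) := by rw [hF0, hFlam, sub_zero]
end

section
/- Let 0 ≤ k ≤ 1, 0 ≤ λ < 1 with (1-k²)λ²/(1-λ²) < 1, and ν > -1. Then for every positive integer N, the remainder R_N = Σ_{j=N}^{∞} (-1)^j ((1/2)_j/j!) (1-k²)^j ∫_0^λ t^{2j}/((1+νt²)(1-t²)^{j+1}) dt satisfies |R_N| ≤ ((1/2)_N λ)/(2 min(1,1+ν) N N!) · [(1-k²)λ²/(1-λ²)]^N. -/
open Finset intervalIntegral Real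

noncomputable def poch (a : ℝ) (k : ℕ) : ℝ := ∏ i ∈ Finset.range k, (a + i)

/-! The terms `b_m = (1/2)_m / m! · (1-k²)^m · I_m` are nonnegative and satisfy
`b_{m+1} ≤ r b_m` with `r = (1-k²)λ²/(1-λ²) < 1`: the coefficient `(1/2)_m / m!` decreases, and
the integrand of `I_{m+1}` is that of `I_m` times `t²/(1-t²) ≤ λ²/(1-λ²)`. So `R_N` is an
alternating series with decreasing terms and `|R_N| ≤ b_N`. Finally `1 + νt² ≥ min 1 (1+ν)` and
`t^{2N} ≤ λ t^{2N-1}` reduce `I_N` to `λ / min 1 (1+ν)` times `∫₀^λ t^{2N-1}/(1-t²)^{N+1} dt`,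
whose antiderivative is `(t²/(1-t²))^N / (2N)`. -/

theorem abs_tsum_alternating_le_of_ratio_le {f : ℕ → ℝ} {r : ℝ} (hr : r < 1)
    (hf : ∀ n, 0 ≤ f n) (hratio : ∀ n, f (n + 1) ≤ r * f n) :
    |∑' n, (-1) ^ n * f n| ≤ f 0 := by
  have hanti : Antitone f := antitone_nat_of_succ_le fun n =>
    (hratio n).trans (mul_le_of_le_one_left (hf n) hr.le)
  have hsum : Summable f := summable_of_ratio_norm_eventually_le hr <|
    Filter.Eventually.of_forall fun n => by
      simpa only [Real.norm_of_nonneg (hf _)] using hratio n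
  simpa using alternating_series_error_bound f hanti hsum 0

section Pochhammer

variable {a : ℝ}

theorem poch_succ (a : ℝ) (m : ℕ) : poch a (m + 1) = poch a m * (a + m) :=
  prod_range_succ _ _

theorem poch_nonneg (ha : 0 ≤ a) (m : ℕ) : 0 ≤ poch a m :=
  prod_nonneg fun _ _ => by positivity

theorem poch_div_factorial_succ_le (ha₀ : 0 ≤ a) (ha₁ : a ≤ 1) (m : ℕ) :
    poch a (m + 1) / (m + 1).factorial ≤ poch a m / m.factorial := by
  rw [poch_succ, Nat.factorial_succ, Nat.cast_mul, mul_comm (poch a m),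
    mul_div_mul_comm, Nat.cast_succ]
  exact mul_le_of_le_one_left (by have := poch_nonneg ha₀ m; positivity)
    ((div_le_one (by positivity)).2 (by linarith))

end Pochhammer

noncomputable def tailIntegrand (ν : ℝ) (m : ℕ) (t : ℝ) : ℝ :=
  t ^ (2 * m) / ((1 + ν * t ^ 2) * (1 - t ^ 2) ^ (m + 1))

section TailIntegrand

variable {ν lam t : ℝ}

theorem min_one_one_add_le (ht : t ^ 2 ≤ 1) : min 1 (1 + ν) ≤ 1 + ν * t ^ 2 := by
  rcases le_total 0 ν with hν | hν
  · exact (min_le_left _ _).trans (by nlinarith [sq_nonneg t])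
  · exact (min_le_right _ _).trans (by nlinarith)

theorem one_add_mul_sq_pos (hν : -1 < ν) (ht : t ^ 2 ≤ 1) : 0 < 1 + ν * t ^ 2 :=
  (lt_min one_pos (by linarith)).trans_le (min_one_one_add_le ht)

theorem tailIntegrand_nonneg (hν : -1 < ν) (ht : t ^ 2 < 1) (m : ℕ) :
    0 ≤ tailIntegrand ν m t := by
  have := one_add_mul_sq_pos hν ht.le
  have : 0 < 1 - t ^ 2 := by linarith
  unfold tailIntegrand
  rw [pow_mul]
  positivity

theorem tailIntegrand_succ (ν : ℝ) (m : ℕ) (t : ℝ) :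
    tailIntegrand ν (m + 1) t = t ^ 2 / (1 - t ^ 2) * tailIntegrand ν m t := by
  unfold tailIntegrand
  rw [div_mul_div_comm]
  ring_nf

theorem continuousOn_tailIntegrand (hν : -1 < ν) (m : ℕ) :
    ContinuousOn (tailIntegrand ν m) {t | t ^ 2 < 1} := by
  refine ContinuousOn.div (by fun_prop) (by fun_prop) fun t ht => ?_
  have := one_add_mul_sq_pos hν (le_of_lt ht)
  have : 0 < 1 - t ^ 2 := by linarith [show t ^ 2 < 1 from ht]
  positivity

theorem intervalIntegrable_tailIntegrand (hν : -1 < ν) (hlam₀ : 0 ≤ lam) (hlam₁ : lam < 1)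
    (m : ℕ) : IntervalIntegrable (tailIntegrand ν m) MeasureTheory.volume 0 lam := by
  refine ((continuousOn_tailIntegrand hν m).mono fun t ht => ?_).intervalIntegrable
  rw [Set.uIcc_of_le hlam₀] at ht
  change t ^ 2 < 1
  nlinarith [ht.1, ht.2]

theorem integral_tailIntegrand_succ_le (hν : -1 < ν) (hlam₀ : 0 ≤ lam) (hlam₁ : lam < 1)
    (m : ℕ) :
    ∫ t in 0..lam, tailIntegrand ν (m + 1) t ≤
      lam ^ 2 / (1 - lam ^ 2) * ∫ t in 0..lam, tailIntegrand ν m t := by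
  rw [← integral_const_mul]
  refine integral_mono_on hlam₀ (intervalIntegrable_tailIntegrand hν hlam₀ hlam₁ _)
    ((intervalIntegrable_tailIntegrand hν hlam₀ hlam₁ _).const_mul _) fun t ht => ?_
  have htlam : t ^ 2 ≤ lam ^ 2 := pow_le_pow_left₀ ht.1 ht.2 2
  have hlam : lam ^ 2 < 1 := by nlinarith
  rw [tailIntegrand_succ]
  gcongr
  exact tailIntegrand_nonneg hν (htlam.trans_lt hlam) m

theorem hasDerivAt_sq_div_one_sub_sq_pow (n : ℕ) (ht : 1 - t ^ 2 ≠ 0) :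
    HasDerivAt (fun t => (t ^ 2 / (1 - t ^ 2)) ^ (n + 1) / (2 * (n + 1 : ℝ)))
      (t ^ (2 * n + 1) / (1 - t ^ 2) ^ (n + 2)) t := by
  have hsq : HasDerivAt (fun t : ℝ => t ^ 2) (2 * t) t := by
    simpa using hasDerivAt_pow 2 t
  refine (((hsq.div ((hasDerivAt_const t 1).sub hsq) ht).pow (n + 1)).div_const
    (2 * (n + 1 : ℝ))).congr_deriv ?_
  simp only [Pi.div_apply, Pi.sub_apply, Nat.add_sub_cancel, Nat.cast_succ, div_pow]
  field_simp
  ring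

theorem integral_pow_div_one_sub_sq_pow (hlam₀ : 0 ≤ lam) (hlam₁ : lam < 1) (n : ℕ) :
    ∫ t in 0..lam, t ^ (2 * n + 1) / (1 - t ^ 2) ^ (n + 2) =
      (lam ^ 2 / (1 - lam ^ 2)) ^ (n + 1) / (2 * (n + 1 : ℝ)) := by
  have hpos : ∀ t ∈ Set.uIcc 0 lam, 0 < 1 - t ^ 2 := fun t ht => by
    rw [Set.uIcc_of_le hlam₀] at ht
    nlinarith [ht.1, ht.2]
  rw [integral_eq_sub_of_hasDerivAt
    (fun t ht => hasDerivAt_sq_div_one_sub_sq_pow n (hpos t ht).ne')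
    (ContinuousOn.intervalIntegrable <|
      ContinuousOn.div (by fun_prop) (by fun_prop) fun t ht => (pow_pos (hpos t ht) _).ne')]
  simp [zero_pow]

theorem tailIntegrand_succ_le (hν : -1 < ν) (ht₀ : 0 ≤ t) (htlam : t ≤ lam) (hlam₁ : lam < 1)
    (n : ℕ) :
    tailIntegrand ν (n + 1) t ≤ lam / min 1 (1 + ν) * (t ^ (2 * n + 1) / (1 - t ^ 2) ^ (n + 2)) := by
  have ht : t ^ 2 ≤ 1 := by nlinarith
  have hμ : 0 < min 1 (1 + ν) := lt_min one_pos (by linarith)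
  have hpos : 0 < 1 - t ^ 2 := by nlinarith
  rw [div_mul_div_comm, tailIntegrand, mul_comm lam, mul_add_one 2 n, pow_succ]
  gcongr
  · exact mul_nonneg (pow_nonneg ht₀ _) (ht₀.trans htlam)
  · exact min_one_one_add_le ht

theorem integral_tailIntegrand_le (hν : -1 < ν) (hlam₀ : 0 ≤ lam) (hlam₁ : lam < 1) {N : ℕ}
    (hN : N ≠ 0) :
    ∫ t in 0..lam, tailIntegrand ν N t ≤
      lam / (2 * min 1 (1 + ν) * N) * (lam ^ 2 / (1 - lam ^ 2)) ^ N := by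
  obtain ⟨n, rfl⟩ := Nat.exists_eq_succ_of_ne_zero hN
  calc ∫ t in 0..lam, tailIntegrand ν (n + 1) t
      ≤ ∫ t in 0..lam, lam / min 1 (1 + ν) * (t ^ (2 * n + 1) / (1 - t ^ 2) ^ (n + 2)) := by
        refine integral_mono_on hlam₀ (intervalIntegrable_tailIntegrand hν hlam₀ hlam₁ _) ?_
          fun t ht => tailIntegrand_succ_le hν ht.1 ht.2 hlam₁ n
        exact (intervalIntegrable_iff_integrableOn_Icc_of_le hlam₀).2 <|
          ContinuousOn.integrableOn_Icc <| ContinuousOn.mul continuousOn_const <|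
            ContinuousOn.div (by fun_prop) (by fun_prop) fun t ht =>
              (pow_pos (by nlinarith [ht.1, ht.2]) _).ne'
    _ = lam / (2 * min 1 (1 + ν) * ↑(n + 1)) * (lam ^ 2 / (1 - lam ^ 2)) ^ (n + 1) := by
        rw [integral_const_mul, integral_pow_div_one_sub_sq_pow hlam₀ hlam₁]
        push_cast
        field_simp

end TailIntegrand

noncomputable def tailTerm (s ν lam : ℝ) (m : ℕ) : ℝ :=
  poch (1 / 2) m / m.factorial * s ^ m * ∫ t in 0..lam, tailIntegrand ν m t

section TailTerm

variable {s ν lam : ℝ}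

theorem integral_tailIntegrand_nonneg (hν : -1 < ν) (hlam₀ : 0 ≤ lam) (hlam₁ : lam < 1)
    (m : ℕ) : 0 ≤ ∫ t in 0..lam, tailIntegrand ν m t :=
  integral_nonneg hlam₀ fun t ht => tailIntegrand_nonneg hν (by nlinarith [ht.1, ht.2]) m

theorem tailTerm_nonneg (hs : 0 ≤ s) (hν : -1 < ν) (hlam₀ : 0 ≤ lam) (hlam₁ : lam < 1)
    (m : ℕ) : 0 ≤ tailTerm s ν lam m := by
  have := poch_nonneg (a := 1 / 2) (by norm_num) m
  have := integral_tailIntegrand_nonneg hν hlam₀ hlam₁ m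
  unfold tailTerm
  positivity

theorem tailTerm_succ_le (hs : 0 ≤ s) (hν : -1 < ν) (hlam₀ : 0 ≤ lam) (hlam₁ : lam < 1)
    (m : ℕ) : tailTerm s ν lam (m + 1) ≤ s * lam ^ 2 / (1 - lam ^ 2) * tailTerm s ν lam m := by
  have := poch_nonneg (a := 1 / 2) (by norm_num) m
  have := integral_tailIntegrand_nonneg hν hlam₀ hlam₁ (m + 1)
  have := integral_tailIntegrand_nonneg hν hlam₀ hlam₁ m
  calc tailTerm s ν lam (m + 1)
      ≤ poch (1 / 2) m / m.factorial * s ^ (m + 1) *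
          (lam ^ 2 / (1 - lam ^ 2) * ∫ t in 0..lam, tailIntegrand ν m t) := by
        unfold tailTerm
        gcongr ?_ * _ * ?_
        · exact poch_div_factorial_succ_le (a := 1 / 2) (by norm_num) (by norm_num) m
        · exact integral_tailIntegrand_succ_le hν hlam₀ hlam₁ m
    _ = s * lam ^ 2 / (1 - lam ^ 2) * tailTerm s ν lam m := by
        unfold tailTerm
        ring

theorem tailTerm_le (hs : 0 ≤ s) (hν : -1 < ν) (hlam₀ : 0 ≤ lam) (hlam₁ : lam < 1) {N : ℕ}
    (hN : N ≠ 0) :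
    tailTerm s ν lam N ≤ poch (1 / 2) N * lam / (2 * min 1 (1 + ν) * N * N.factorial) *
      (s * lam ^ 2 / (1 - lam ^ 2)) ^ N := by
  have := poch_nonneg (a := 1 / 2) (by norm_num) N
  calc tailTerm s ν lam N
      ≤ poch (1 / 2) N / N.factorial * s ^ N *
          (lam / (2 * min 1 (1 + ν) * N) * (lam ^ 2 / (1 - lam ^ 2)) ^ N) := by
        unfold tailTerm
        gcongr
        exact integral_tailIntegrand_le hν hlam₀ hlam₁ hN
    _ = _ := by
        rw [mul_div_assoc s, mul_pow]
        field_simp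

end TailTerm

theorem remainder_bound_region_one (k lam ν : ℝ) (hk0 : 0 ≤ k) (hk1 : k ≤ 1)
    (hlam0 : 0 ≤ lam) (hlam1 : lam < 1)
    (hreg : (1 - k ^ 2) * lam ^ 2 / (1 - lam ^ 2) < 1)
    (hν : -1 < ν) (N : ℕ) (hN : 1 ≤ N) :
    |∑' j : ℕ, (-1 : ℝ) ^ (j + N) * (poch (1 / 2) (j + N) / (Nat.factorial (j + N))) *
        (1 - k ^ 2) ^ (j + N) *
        ∫ t in (0 : ℝ)..lam,
          t ^ (2 * (j + N)) / ((1 + ν * t ^ 2) * (1 - t ^ 2) ^ (j + N + 1))| ≤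
      poch (1 / 2) N * lam / (2 * min 1 (1 + ν) * N * (Nat.factorial N)) *
        ((1 - k ^ 2) * lam ^ 2 / (1 - lam ^ 2)) ^ N := by
  have hs : 0 ≤ 1 - k ^ 2 := by nlinarith
  have hterm (j : ℕ) :
      (-1 : ℝ) ^ (j + N) * (poch (1 / 2) (j + N) / (Nat.factorial (j + N))) *
        (1 - k ^ 2) ^ (j + N) *
        ∫ t in (0 : ℝ)..lam,
          t ^ (2 * (j + N)) / ((1 + ν * t ^ 2) * (1 - t ^ 2) ^ (j + N + 1)) =
      (-1) ^ N * ((-1) ^ j * tailTerm (1 - k ^ 2) ν lam (j + N)) := by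
    simp only [tailTerm, tailIntegrand]
    ring
  rw [tsum_congr hterm, tsum_mul_left, abs_mul, abs_neg_one_pow, one_mul]
  refine (abs_tsum_alternating_le_of_ratio_le hreg
    (fun j => tailTerm_nonneg hs hν hlam0 hlam1 _) fun j => ?_).trans ?_
  · rw [add_right_comm]
    exact tailTerm_succ_le hs hν hlam0 hlam1 _
  · rw [zero_add]
    exact tailTerm_le hs hν hlam0 hlam1 (Nat.one_le_iff_ne_zero.1 hN)
end

section
/- Let 0 ≤ k ≤ 1, 0 ≤ λ < 1 with (1-k²)λ²/(1-λ²) ≤ 1, ν > -1, and j ≥ 0 an integer. Then ((1/2)_{j+1}/(j+1)!) (1-k²)^{j+1} ∫_0^λ t^{2j+2}/((1+νt²)(1-t²)^{j+2}) dt ≤ ((1/2)_j/j!) (1-k²)^j ∫_0^λ t^{2j}/((1+νt²)(1-t²)^{j+1}) dt, i.e. the terms of the binomial expansion of Π(λ,ν,k) decrease monotonically in absolute value. -/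
open Finset intervalIntegral

lemma poch_half_pos (j : ℕ) : 0 < poch (1/2) j := by
  unfold poch
  apply Finset.prod_pos
  intro i _
  positivity

theorem terms_decrease (k lam ν : ℝ) (hk0 : 0 ≤ k) (hk1 : k ≤ 1)
    (hlam0 : 0 ≤ lam) (hlam1 : lam < 1)
    (hreg : (1 - k ^ 2) * lam ^ 2 / (1 - lam ^ 2) ≤ 1)
    (hν : -1 < ν) (j : ℕ) :
    (poch (1 / 2) (j + 1) / (Nat.factorial (j + 1))) * (1 - k ^ 2) ^ (j + 1) *
        ∫ t in (0 : ℝ)..lam,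
          t ^ (2 * j + 2) / ((1 + ν * t ^ 2) * (1 - t ^ 2) ^ (j + 2)) ≤
      (poch (1 / 2) j / (Nat.factorial j)) * (1 - k ^ 2) ^ j *
        ∫ t in (0 : ℝ)..lam,
          t ^ (2 * j) / ((1 + ν * t ^ 2) * (1 - t ^ 2) ^ (j + 1)) := by
  have hk2 : 0 ≤ 1 - k ^ 2 := by nlinarith
  have hlam2 : 0 < 1 - lam ^ 2 := by nlinarith
  have hreg' : (1 - k ^ 2) * lam ^ 2 ≤ 1 - lam ^ 2 := by
    rw [div_le_one hlam2] at hreg; exact hreg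
  -- denominators positive on [0, lam]
  have hden : ∀ t ∈ Set.Icc (0:ℝ) lam, 0 < 1 + ν * t ^ 2 ∧ 0 < 1 - t ^ 2 := by
    intro t ht
    obtain ⟨ht0, ht1⟩ := ht
    have ht2 : t ^ 2 ≤ lam ^ 2 := by nlinarith
    have h2 : 0 < 1 - t ^ 2 := by nlinarith
    refine ⟨?_, h2⟩
    nlinarith [sq_nonneg t]
  -- continuity / integrability helper
  have hcont : ∀ m n : ℕ,
      ContinuousOn (fun t : ℝ => t ^ m / ((1 + ν * t ^ 2) * (1 - t ^ 2) ^ n))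
        (Set.Icc (0:ℝ) lam) := by
    intro m n
    apply ContinuousOn.div (by fun_prop) (by fun_prop)
    intro t ht
    obtain ⟨h1, h2⟩ := hden t ht
    positivity
  have hint : ∀ m n : ℕ,
      IntervalIntegrable (fun t : ℝ => t ^ m / ((1 + ν * t ^ 2) * (1 - t ^ 2) ^ n))
        MeasureTheory.volume 0 lam := by
    intro m n
    apply ContinuousOn.intervalIntegrable
    rw [Set.uIcc_of_le hlam0]; exact hcont m n
  rw [← intervalIntegral.integral_const_mul, ← intervalIntegral.integral_const_mul]
  apply intervalIntegral.integral_mono_on hlam0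
    (((hint (2*j+2) (j+2)).const_mul _)) (((hint (2*j) (j+1)).const_mul _))
  intro t ht
  obtain ⟨h1, h2⟩ := hden t ht
  obtain ⟨ht0, ht1⟩ := ht
  have htl : t ^ 2 ≤ lam ^ 2 := by nlinarith
  have ht2 : (1 - k ^ 2) * t ^ 2 ≤ 1 - t ^ 2 := by
    nlinarith [mul_le_mul_of_nonneg_left htl hk2]
  have hpoch : poch (1/2) (j+1) = poch (1/2) j * (1/2 + j) := by
    unfold poch; rw [Finset.prod_range_succ]
  have hfact : (Nat.factorial (j+1) : ℝ) = (j+1) * Nat.factorial j := by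
    push_cast [Nat.factorial_succ]; ring
  have hfj : (0:ℝ) < Nat.factorial j := by positivity
  have hj1 : (0:ℝ) < (j:ℝ) + 1 := by positivity
  set R : ℝ := poch (1/2) j / (Nat.factorial j) * (1 - k ^ 2) ^ j *
      (t ^ (2*j) / ((1 + ν * t ^ 2) * (1 - t ^ 2) ^ (j+1))) with hR
  have hRnn : 0 ≤ R := by
    have := poch_half_pos j
    have h2' : (0:ℝ) < (1 - t ^ 2) ^ (j+1) := by positivity
    positivity
  have hkey : poch (1/2) (j+1) / (Nat.factorial (j+1)) * (1 - k ^ 2) ^ (j+1) *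
      (t ^ (2*j+2) / ((1 + ν * t ^ 2) * (1 - t ^ 2) ^ (j+2))) =
      R * (((1/2 + j) / (j+1)) * ((1 - k ^ 2) * t ^ 2 / (1 - t ^ 2))) := by
    rw [hR, hpoch, hfact]
    field_simp
    ring
  have hq1 : ((1/2 + (j:ℝ)) / (j+1)) * ((1 - k ^ 2) * t ^ 2 / (1 - t ^ 2)) ≤ 1 := by
    have ha : (1/2 + (j:ℝ)) / (j+1) ≤ 1 := by
      rw [div_le_one hj1]; linarith
    have hb : (1 - k ^ 2) * t ^ 2 / (1 - t ^ 2) ≤ 1 := by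
      rw [div_le_one h2]; exact ht2
    have hbnn : 0 ≤ (1 - k ^ 2) * t ^ 2 / (1 - t ^ 2) := by positivity
    have hann : 0 ≤ (1/2 + (j:ℝ)) / (j+1) := by positivity
    calc ((1/2 + (j:ℝ)) / (j+1)) * ((1 - k ^ 2) * t ^ 2 / (1 - t ^ 2))
        ≤ 1 * 1 := by apply mul_le_mul ha hb hbnn (by norm_num)
      _ = 1 := by norm_num
  calc poch (1/2) (j+1) / (Nat.factorial (j+1)) * (1 - k ^ 2) ^ (j+1) *
      (t ^ (2*j+2) / ((1 + ν * t ^ 2) * (1 - t ^ 2) ^ (j+2)))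
      = R * (((1/2 + j) / (j+1)) * ((1 - k ^ 2) * t ^ 2 / (1 - t ^ 2))) := hkey
    _ ≤ R * 1 := by exact mul_le_mul_of_nonneg_left hq1 hRnn
    _ = R := mul_one R
end

section
/- For every non-negative integer n and 0 < k < 1: ((1/2)_n/n!) ₂F₁(-n, 1/2; 1/2-n; k²) = ₂F₁(-n, 1/2; 1; 1-k²). -/
/-!
Expanding `₂F₁(-n, b; c; 1 - x)` in powers of `x`, the coefficient of `x ^ j` is, after shifting
the summation index by `j`, a multiple of the terminating series `₂F₁(-(n - j), b + j; c + j; 1)`.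
The Chu–Vandermonde identity sums it to `(c - b)_(n-j) / (c + j)_(n-j)`, and the reflection
`(-a)_j = (-1)^j (a - j + 1)_j` turns the result into the coefficient of
`((c - b)_n / (c)_n) ₂F₁(-n, b; b - c - n + 1; x)`. The theorem is the case `b = 1/2`, `c = 1`.
-/

open Finset

open Nat Polynomial

lemma poch_eq_eval (a : ℝ) (k : ℕ) : poch a k = (ascPochhammer ℝ k).eval a := by
  induction k with
  | zero => simp [poch]
  | succ k ih => rw [poch, prod_range_succ, ← poch, ih, ascPochhammer_succ_eval]

lemma poch_add (a : ℝ) (m k : ℕ) : poch a (m + k) = poch a m * poch (a + m) k := by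
  simp only [poch_eq_eval, ← ascPochhammer_mul, eval_mul, eval_comp, eval_add, eval_X,
    eval_natCast]

lemma poch_one (k : ℕ) : poch 1 k = k ! := by
  rw [poch_eq_eval, ascPochhammer_eval_one]

lemma poch_pos {a : ℝ} (ha : 0 < a) (k : ℕ) : 0 < poch a k :=
  prod_pos fun i _ => by positivity

lemma poch_neg (a : ℝ) (k : ℕ) : poch (-a) k = (-1) ^ k * poch (a - k + 1) k := by
  rw [poch_eq_eval, poch_eq_eval, ascPochhammer_eval_neg_eq_descPochhammer,
    descPochhammer_eval_eq_ascPochhammer]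

lemma poch_neg_natCast (n k : ℕ) : poch (-n) k = (-1) ^ k * n.descFactorial k := by
  rw [poch_eq_eval, ascPochhammer_eval_neg_eq_descPochhammer, descPochhammer_eval_eq_descFactorial]

lemma descPochhammer_smeval_eq_poch (x : ℝ) (k : ℕ) :
    (descPochhammer ℤ k).smeval x = poch (x - k + 1) k := by
  rw [descPochhammer_smeval_eq_ascPochhammer, ascPochhammer_smeval_eq_eval, poch_eq_eval]

lemma poch_sub_eq_sum_choose (b c : ℝ) (N : ℕ) :
    poch (c - b) N =
      ∑ m ∈ range (N + 1), N.choose m * ((-1) ^ m * poch b m) * poch (c + m) (N - m) := by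
  have h := Ring.descPochhammer_smeval_add N (Commute.all (-b) (c + N - 1))
  rw [Nat.sum_antidiagonal_eq_sum_range_succ (fun i j => (N.choose i : ℝ) *
    ((descPochhammer ℤ i).smeval (-b) * (descPochhammer ℤ j).smeval (c + N - 1)))] at h
  convert h using 1
  · rw [descPochhammer_smeval_eq_poch, show -b + (c + N - 1) - N + 1 = c - b by ring]
  · refine sum_congr rfl fun m hm => ?_
    have hmN : m ≤ N := Nat.lt_succ_iff.mp (mem_range.mp hm)
    rw [descPochhammer_smeval_eq_poch, descPochhammer_smeval_eq_poch, Nat.cast_sub hmN,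
      show -b - m + 1 = -(b + m - 1) by ring, poch_neg, show b + m - 1 - m + 1 = b by ring,
      show c + N - 1 - (N - m) + 1 = c + m by ring]
    ring

noncomputable def hyp2F1Coeff (n : ℕ) (b c : ℝ) (i : ℕ) : ℝ :=
  poch (-n) i * poch b i / (poch c i * i !)

/-- `hyp2F1 n b c x` is `₂F₁(-n, b; c; x)`, a polynomial since `(-n)_i = 0` for `i > n`. -/
noncomputable def hyp2F1 (n : ℕ) (b c x : ℝ) : ℝ :=
  ∑ i ∈ range (n + 1), hyp2F1Coeff n b c i * x ^ i

theorem hyp2F1_one (N : ℕ) (b c : ℝ) (hc : poch c N ≠ 0) :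
    hyp2F1 N b c 1 = poch (c - b) N / poch c N := by
  rw [eq_div_iff hc, hyp2F1, sum_mul, poch_sub_eq_sum_choose]
  refine sum_congr rfl fun m hm => ?_
  have hmN : m ≤ N := Nat.lt_succ_iff.mp (mem_range.mp hm)
  have hsplit : poch c N = poch c m * poch (c + m) (N - m) := by
    rw [← poch_add, Nat.add_sub_cancel' hmN]
  have hcm : poch c m ≠ 0 := left_ne_zero_of_mul (hsplit ▸ hc)
  rw [hyp2F1Coeff, poch_neg_natCast, descFactorial_eq_factorial_mul_choose, hsplit]
  field_simp
  push_cast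
  ring

lemma sum_mul_one_sub_pow {R : Type*} [CommRing R] (a : ℕ → R) (n : ℕ) (x : R) :
    ∑ i ∈ range (n + 1), a i * (1 - x) ^ i =
      ∑ j ∈ range (n + 1),
        (∑ m ∈ range (n + 1 - j), ((j + m).choose j : R) * a (j + m)) * (-x) ^ j := by
  calc ∑ i ∈ range (n + 1), a i * (1 - x) ^ i
      = ∑ i ∈ range (n + 1), ∑ j ∈ range (i + 1), (i.choose j : R) * a i * (-x) ^ j := by
        refine sum_congr rfl fun i _ => ?_
        rw [sub_eq_neg_add, add_pow, mul_sum]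
        exact sum_congr rfl fun j _ => by ring
    _ = ∑ j ∈ range (n + 1), ∑ i ∈ Ico j (n + 1), (i.choose j : R) * a i * (-x) ^ j :=
        sum_comm' fun i j => by simp only [mem_range, mem_Ico]; omega
    _ = _ := by
        refine sum_congr rfl fun j _ => ?_
        rw [sum_Ico_eq_sum_range, sum_mul]

lemma choose_mul_hyp2F1Coeff_add (N j m : ℕ) (b c : ℝ) :
    ((j + m).choose j : ℝ) * hyp2F1Coeff (j + N) b c (j + m) =
      hyp2F1Coeff (j + N) b c j * hyp2F1Coeff N (b + j) (c + j) m := by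
  have hfac : ((j + m)! : ℝ) = (j + m).choose j * j ! * m ! := by
    rw [choose_symm_add, ← add_choose_mul_factorial_mul_factorial]; push_cast; ring
  have hneg : -((j + N : ℕ) : ℝ) + j = -N := by push_cast; ring
  have hchoose : ((j + m).choose j : ℝ) ≠ 0 := by
    exact_mod_cast (choose_pos (le_add_right j m)).ne'
  simp only [hyp2F1Coeff, poch_add, hneg, hfac, div_eq_mul_inv, mul_inv]
  field_simp

theorem hyp2F1_one_sub (n : ℕ) (b c x : ℝ) (hc : poch c n ≠ 0) (hcb : poch (c - b) n ≠ 0) :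
    hyp2F1 n b c (1 - x) = poch (c - b) n / poch c n * hyp2F1 n b (b - c - n + 1) x := by
  rw [hyp2F1, sum_mul_one_sub_pow, hyp2F1, mul_sum]
  refine sum_congr rfl fun j hj => ?_
  obtain ⟨N, rfl⟩ := Nat.exists_eq_add_of_le (Nat.lt_succ_iff.mp (mem_range.mp hj))
  have hc_split : poch c (j + N) = poch c j * poch (c + j) N := poch_add c j N
  have hcb_split : poch (c - b) (j + N) = poch (c - b) N * poch (c - b + N) j := by
    rw [add_comm j, poch_add]
  have hd : poch (b - c - (j + N : ℕ) + 1) j = (-1) ^ j * poch (c - b + N) j := by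
    rw [show b - c - (j + N : ℕ) + 1 = -(c - b + N + j - 1) by push_cast; ring, poch_neg,
      show c - b + N + j - 1 - j + 1 = c - b + N by ring]
  obtain ⟨hcj, hcjN⟩ := mul_ne_zero_iff.mp (hc_split ▸ hc)
  have hcbN : poch (c - b + N) j ≠ 0 := right_ne_zero_of_mul (hcb_split ▸ hcb)
  have hcoeff : ∑ m ∈ range (N + 1), ((j + m).choose j : ℝ) * hyp2F1Coeff (j + N) b c (j + m) =
      hyp2F1Coeff (j + N) b c j * (poch (c - b) N / poch (c + j) N) := by
    rw [← add_sub_add_right_eq_sub c b (j : ℝ), ← hyp2F1_one N (b + j) (c + j) hcjN, hyp2F1,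
      mul_sum]
    simp only [choose_mul_hyp2F1Coeff_add, one_pow, mul_one]
  rw [show j + N + 1 - j = N + 1 by omega, hcoeff, hyp2F1Coeff, hyp2F1Coeff, hc_split, hcb_split,
    hd, neg_pow]
  field_simp
  rw [← pow_mul, pow_mul', neg_one_sq, one_pow, mul_one]

theorem hypergeometric_transform_general (n : ℕ) (k : ℝ) :
    (poch (1 / 2) n / (Nat.factorial n)) *
        ∑ i ∈ Finset.range (n + 1),
          poch (-(n : ℝ)) i * poch (1 / 2) i /
            (poch (1 / 2 - n) i * (Nat.factorial i)) * (k ^ 2) ^ i =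
      ∑ i ∈ Finset.range (n + 1),
        poch (-(n : ℝ)) i * poch (1 / 2) i /
          ((Nat.factorial i) * (Nat.factorial i)) * (1 - k ^ 2) ^ i := by
  have h := hyp2F1_one_sub n (1 / 2) 1 (k ^ 2)
    (by rw [poch_one]; exact_mod_cast n.factorial_ne_zero) (poch_pos (by norm_num) n).ne'
  rw [show (1 : ℝ) - 1 / 2 = 1 / 2 by norm_num, show (1 / 2 : ℝ) - 1 - n + 1 = 1 / 2 - n by ring]
    at h
  simpa only [hyp2F1, hyp2F1Coeff, poch_one] using h.symm

theorem hypergeometric_transform (n : ℕ) (k : ℝ) (hk0 : 0 < k) (hk1 : k < 1) :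
    (poch (1 / 2) n / (Nat.factorial n)) *
        ∑ i ∈ Finset.range (n + 1),
          poch (-(n : ℝ)) i * poch (1 / 2) i /
            (poch (1 / 2 - n) i * (Nat.factorial i)) * (k ^ 2) ^ i =
      ∑ i ∈ Finset.range (n + 1),
        poch (-(n : ℝ)) i * poch (1 / 2) i /
          ((Nat.factorial i) * (Nat.factorial i)) * (1 - k ^ 2) ^ i :=
  hypergeometric_transform_general n k
end
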